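/- arXiv:1106.1609 — 2 statements merged into one kernel-verified Lean document; each statement's English description precedes it below -/
import Mathlib

section
/- On (R^{2m})^N with the weighted Poisson bracket determined by weights Γ_j, the functions F⁺_{11}, ..., F⁺_{mm} (where F⁺_{αα} = Σ_j Γ_j (x_{j,α}² + y_{j,α}²)) and the functions Q_α² + P_α² for 1 ≤ α ≤ m pairwise Poisson-commute: {F⁺_{αα}, F⁺_{ββ}} = 0, {Q_α² + P_α², Q_β² + P_β²} = 0, and {F⁺_{αα}, Q_β² + P_β²} = 0 for all α, β. -/
/- STATEMENT 9: On (ℝ^{2m})^N with the weighted Poisson bracket, the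
functions F⁺_{αα} = Σ_j Γ_j (x_{j,α}² + y_{j,α}²) and Q_α² + P_α²
(1 ≤ α ≤ m) pairwise Poisson-commute. -/

noncomputable section

abbrev PV (N m : ℕ) : Type := (Fin N × Fin m × Bool) → ℝ

def pd {N m : ℕ} (f : PV N m → ℝ) (p : PV N m) (idx : Fin N × Fin m × Bool) : ℝ :=
  fderiv ℝ f p (Pi.single idx 1)

def pb {N m : ℕ} (Γ : Fin N → ℝ) (f g : PV N m → ℝ) (p : PV N m) : ℝ :=
  ∑ j, (Γ j)⁻¹ *
    ∑ α, (pd f p (j, α, false) * pd g p (j, α, true) -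
          pd f p (j, α, true) * pd g p (j, α, false))

def Qf {N m : ℕ} (Γ : Fin N → ℝ) (α : Fin m) : PV N m → ℝ :=
  fun p => ∑ j, Γ j * p (j, α, false)

def Pf {N m : ℕ} (Γ : Fin N → ℝ) (α : Fin m) : PV N m → ℝ :=
  fun p => ∑ j, Γ j * p (j, α, true)

def Ff {N m : ℕ} (Γ : Fin N → ℝ) (α : Fin m) : PV N m → ℝ :=
  fun p => ∑ j, Γ j * (p (j, α, false) ^ 2 + p (j, α, true) ^ 2)

/-- Q_α² + P_α². -/
def QP {N m : ℕ} (Γ : Fin N → ℝ) (α : Fin m) : PV N m → ℝ :=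
  fun p => (Qf Γ α p) ^ 2 + (Pf Γ α p) ^ 2

/-! Each of `F_α`, `Q_α² + P_α²` has its gradient in the block of coordinates
`x_{·,α}, y_{·,α}`, so brackets between different blocks vanish. Within one block, the bracket of
`F_α` with `Q_α² + P_α²` is `4 (P_α Q_α - Q_α P_α) = 0`, because `{Q_α, F_α} = 2 P_α` and
`{P_α, F_α} = -2 Q_α`; the two other brackets vanish termwise by antisymmetry. -/

variable {N m : ℕ}

lemma pd_sum_mul_coord (w : Fin N → ℝ) (α : Fin m) (c : Bool) (p : PV N m)
    (j : Fin N) (γ : Fin m) (b : Bool) :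
    pd (fun q => ∑ k, w k * q (k, α, c)) p (j, γ, b) = if γ = α ∧ b = c then w j else 0 := by
  unfold pd
  simp (disch := fun_prop) only [fderiv_fun_sum, fderiv_const_mul, fderiv_apply]
  simp [Pi.single_apply, ite_and, eq_comm]

lemma pd_Qf (Γ : Fin N → ℝ) (α : Fin m) (p : PV N m) (j : Fin N) (γ : Fin m) (b : Bool) :
    pd (Qf Γ α) p (j, γ, b) = if γ = α ∧ b = false then Γ j else 0 :=
  pd_sum_mul_coord Γ α false p j γ b

lemma pd_Pf (Γ : Fin N → ℝ) (α : Fin m) (p : PV N m) (j : Fin N) (γ : Fin m) (b : Bool) :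
    pd (Pf Γ α) p (j, γ, b) = if γ = α ∧ b = true then Γ j else 0 :=
  pd_sum_mul_coord Γ α true p j γ b

lemma pd_sq_add_sq {f g : PV N m → ℝ} {p : PV N m} (hf : DifferentiableAt ℝ f p)
    (hg : DifferentiableAt ℝ g p) (idx : Fin N × Fin m × Bool) :
    pd (fun q => f q ^ 2 + g q ^ 2) p idx = 2 * f p * pd f p idx + 2 * g p * pd g p idx := by
  unfold pd
  simp (disch := fun_prop) only [fderiv_fun_add, fderiv_fun_pow]
  simp

def HasBlockGradient (f : PV N m → ℝ) (p : PV N m) (α : Fin m) (u : Fin N → Bool → ℝ) : Prop :=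
  ∀ j γ b, pd f p (j, γ, b) = if γ = α then u j b else 0

lemma pb_eq_of_hasBlockGradient (Γ : Fin N → ℝ) {f g : PV N m → ℝ} {p : PV N m} {α β : Fin m}
    {u v : Fin N → Bool → ℝ} (hf : HasBlockGradient f p α u) (hg : HasBlockGradient g p β v) :
    pb Γ f g p =
      if α = β then ∑ j, (Γ j)⁻¹ * (u j false * v j true - u j true * v j false) else 0 := by
  have block_sum : ∀ j, ∑ γ, (pd f p (j, γ, false) * pd g p (j, γ, true) -
      pd f p (j, γ, true) * pd g p (j, γ, false)) =
      if α = β then u j false * v j true - u j true * v j false else 0 := by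
    intro j
    simp only [hf _ _ _, hg _ _ _]
    rw [Finset.sum_eq_single α (fun γ _ hγ => by simp [hγ]) (by simp), if_pos rfl, if_pos rfl]
    split_ifs <;> simp
  simp only [pb, block_sum]
  split_ifs <;> simp

lemma hasBlockGradient_Ff (Γ : Fin N → ℝ) (α : Fin m) (p : PV N m) :
    HasBlockGradient (Ff Γ α) p α fun j b => 2 * Γ j * p (j, α, b) := by
  intro j γ b
  unfold pd Ff
  simp (disch := fun_prop) only [fderiv_fun_sum, fderiv_const_mul, fderiv_fun_add,
    fderiv_fun_pow, fderiv_apply]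
  rcases eq_or_ne γ α with rfl | hγ
  · cases b <;> simp [Pi.single_apply] <;> ring
  · simp [hγ, hγ.symm]

lemma hasBlockGradient_QP (Γ : Fin N → ℝ) (α : Fin m) (p : PV N m) :
    HasBlockGradient (QP Γ α) p α
      fun j b => 2 * Γ j * if b then Pf Γ α p else Qf Γ α p := by
  intro j γ b
  have hQ : DifferentiableAt ℝ (Qf Γ α) p := by unfold Qf; fun_prop
  have hP : DifferentiableAt ℝ (Pf Γ α) p := by unfold Pf; fun_prop
  unfold QP
  rw [pd_sq_add_sq hQ hP, pd_Qf, pd_Pf]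
  rcases eq_or_ne γ α with rfl | hγ
  · cases b <;> simp <;> ring
  · simp [hγ]

lemma pb_Ff_QP_self (Γ : Fin N → ℝ) (α : Fin m) (p : PV N m) :
    pb Γ (Ff Γ α) (QP Γ α) p = 0 := by
  rw [pb_eq_of_hasBlockGradient Γ (hasBlockGradient_Ff Γ α p) (hasBlockGradient_QP Γ α p)]
  simp only [Bool.false_eq_true, ↓reduceIte]
  calc ∑ j, (Γ j)⁻¹ * (2 * Γ j * p (j, α, false) * (2 * Γ j * Pf Γ α p) -
          2 * Γ j * p (j, α, true) * (2 * Γ j * Qf Γ α p))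
      = ∑ j, (4 * Pf Γ α p * (Γ j * p (j, α, false)) -
          4 * Qf Γ α p * (Γ j * p (j, α, true))) :=
        Finset.sum_congr rfl fun j _ => by
          linear_combination
            4 * (Pf Γ α p * p (j, α, false) - Qf Γ α p * p (j, α, true)) * inv_mul_mul_self (Γ j)
    _ = 4 * Pf Γ α p * Qf Γ α p - 4 * Qf Γ α p * Pf Γ α p := by
        rw [Finset.sum_sub_distrib, ← Finset.mul_sum, ← Finset.mul_sum]
        rfl
    _ = 0 := by ring

theorem vortex_involutive_integrals_general
    {N m : ℕ} (Γ : Fin N → ℝ)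
    (α β : Fin m) (p : PV N m) :
    pb Γ (Ff Γ α) (Ff Γ β) p = 0 ∧
    pb Γ (QP Γ α) (QP Γ β) p = 0 ∧
    pb Γ (Ff Γ α) (QP Γ β) p = 0 := by
  rcases eq_or_ne α β with rfl | hαβ
  · rw [pb_eq_of_hasBlockGradient Γ (hasBlockGradient_Ff Γ α p) (hasBlockGradient_Ff Γ α p),
      pb_eq_of_hasBlockGradient Γ (hasBlockGradient_QP Γ α p) (hasBlockGradient_QP Γ α p)]
    simp only [Bool.false_eq_true, ↓reduceIte]
    exact ⟨Finset.sum_eq_zero fun j _ => by ring, Finset.sum_eq_zero fun j _ => by ring,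
      pb_Ff_QP_self Γ α p⟩
  · rw [pb_eq_of_hasBlockGradient Γ (hasBlockGradient_Ff Γ α p) (hasBlockGradient_Ff Γ β p),
      pb_eq_of_hasBlockGradient Γ (hasBlockGradient_QP Γ α p) (hasBlockGradient_QP Γ β p),
      pb_eq_of_hasBlockGradient Γ (hasBlockGradient_Ff Γ α p) (hasBlockGradient_QP Γ β p)]
    simp only [if_neg hαβ, and_self]

theorem vortex_involutive_integrals
    {N m : ℕ} (Γ : Fin N → ℝ) (hΓ : ∀ j, Γ j ≠ 0)
    (α β : Fin m) (p : PV N m) :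
    pb Γ (Ff Γ α) (Ff Γ β) p = 0 ∧
    pb Γ (QP Γ α) (QP Γ β) p = 0 ∧
    pb Γ (Ff Γ α) (QP Γ β) p = 0 :=
  vortex_involutive_integrals_general Γ α β p

end
end

section
/- The Hamiltonian 𝓗 = 2 C Σ_{j<k} Γ_j Γ_k |z̃_j − z̃_k|^{2−2m} on (R^{2m})^N Poisson-commutes with each F⁺_{αα} = Σ_j Γ_j (x_{j,α}² + y_{j,α}²) and with each F⁻_{αβ} = Σ_j Γ_j (x_{j,α} y_{j,β} − x_{j,β} y_{j,α}) and F⁺_{αβ} = Σ_j Γ_j (x_{j,α} x_{j,β} + y_{j,α} y_{j,β}), on the open set where all z̃_j are pairwise distinct. -/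
/- STATEMENT 12: The Hamiltonian 𝓗 = 2C Σ_{j<k} Γ_j Γ_k |z̃_j − z̃_k|^{2−2m}
on (ℝ^{2m})^N Poisson-commutes with each
F⁺_{αβ} = Σ_j Γ_j (x_{j,α} x_{j,β} + y_{j,α} y_{j,β}) (in particular F⁺_{αα})
and F⁻_{αβ} = Σ_j Γ_j (x_{j,α} y_{j,β} − x_{j,β} y_{j,α}), on the open set
where all z̃_j are pairwise distinct. -/

noncomputable section

def dsq {N m : ℕ} (j k : Fin N) (p : PV N m) : ℝ :=
  ∑ i : Fin m × Bool, (p (j, i) - p (k, i)) ^ 2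

def Hf {N m : ℕ} (C : ℝ) (Γ : Fin N → ℝ) : PV N m → ℝ :=
  fun p => 2 * C * ∑ j, ∑ k,
    if j < k then Γ j * Γ k * (Real.sqrt (dsq j k p)) ^ ((2 : ℤ) - 2 * m) else 0

/-- F⁺_{αβ} = Σ_j Γ_j (x_{j,α} x_{j,β} + y_{j,α} y_{j,β}). -/
def Fplus {N m : ℕ} (Γ : Fin N → ℝ) (α β : Fin m) : PV N m → ℝ :=
  fun p => ∑ j, Γ j * (p (j, α, false) * p (j, β, false) +
                       p (j, α, true) * p (j, β, true))

/-- F⁻_{αβ} = Σ_j Γ_j (x_{j,α} y_{j,β} − x_{j,β} y_{j,α}). -/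
def Fminus {N m : ℕ} (Γ : Fin N → ℝ) (α β : Fin m) : PV N m → ℝ :=
  fun p => ∑ j, Γ j * (p (j, α, false) * p (j, β, true) -
                       p (j, β, false) * p (j, α, true))

/-!
The bracket `{𝓗, F}` is the derivative of `𝓗` along the Hamiltonian vector field `X_F`. For
`F = F^±_{αβ}` the weights cancel and `X_F` moves every vortex by one and the same skew-symmetric
matrix `A` (an element of `𝔲(m) ⊂ 𝔰𝔬(2m)`), so each squared distance `|z_j - z_k|²` changes at rate
`2 ⟪z_j - z_k, A (z_j - z_k)⟫ = 0`. Since `𝓗` depends on the positions only through these squared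
distances, and is differentiable off the collision set, its derivative along `X_F` vanishes.
-/

open Matrix in
theorem dotProduct_mulVec_self_eq_zero {ι R : Type*} [Fintype ι] [CommRing R] [IsAddTorsionFree R]
    {A : Matrix ι ι R} (hA : Aᵀ = -A) (u : ι → R) : u ⬝ᵥ (A *ᵥ u) = 0 := by
  refine self_eq_neg.mp ?_
  conv_lhs => rw [dotProduct_mulVec, ← transpose_transpose A, vecMul_transpose, hA,
    dotProduct_comm]
  rw [neg_mulVec, dotProduct_neg]

theorem fderiv_coord {ι 𝕜 : Type*} [Fintype ι] [NontriviallyNormedField 𝕜] (i : ι) (p : ι → 𝕜) :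
    fderiv 𝕜 (fun q : ι → 𝕜 => q i) p = ContinuousLinearMap.proj i :=
  (hasFDerivAt_apply i p).fderiv

section

variable {N m : ℕ}

theorem fderiv_apply_eq_sum_pd (f : PV N m → ℝ) (p v : PV N m) :
    fderiv ℝ f p v = ∑ x, v x * pd f p x := by
  conv_lhs => rw [← Finset.univ_sum_single v]
  refine (map_sum _ _ _).trans (Finset.sum_congr rfl fun x _ => ?_)
  rw [pd, ← smul_eq_mul, ← map_smul, ← Pi.single_smul', smul_eq_mul, mul_one]

def hamiltonianField (Γ : Fin N → ℝ) (g : PV N m → ℝ) (p : PV N m) : PV N m :=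
  fun x => (Γ x.1)⁻¹ * bif x.2.2 then -pd g p (x.1, x.2.1, false) else pd g p (x.1, x.2.1, true)

theorem pb_eq_fderiv_hamiltonianField (Γ : Fin N → ℝ) (f g : PV N m → ℝ) (p : PV N m) :
    pb Γ f g p = fderiv ℝ f p (hamiltonianField Γ g p) := by
  simp only [fderiv_apply_eq_sum_pd, Fintype.sum_prod_type, Fintype.sum_bool, pb, Finset.mul_sum,
    hamiltonianField, cond_true, cond_false]
  refine Finset.sum_congr rfl fun j _ => Finset.sum_congr rfl fun α _ => ?_
  ring

theorem dsq_nonneg (j k : Fin N) (p : PV N m) : 0 ≤ dsq j k p :=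
  Finset.sum_nonneg fun _ _ => sq_nonneg _

theorem differentiableAt_dsq (j k : Fin N) (p : PV N m) : DifferentiableAt ℝ (dsq j k) p := by
  unfold dsq
  fun_prop

theorem fderiv_dsq_apply (j k : Fin N) (p v : PV N m) :
    fderiv ℝ (dsq j k) p v = 2 * ∑ i, (p (j, i) - p (k, i)) * (v (j, i) - v (k, i)) := by
  unfold dsq
  rw [fderiv_fun_sum fun i _ => by fun_prop]
  simp (disch := fun_prop) only [sum_apply, fderiv_fun_pow, fderiv_fun_sub, fderiv_coord]
  simp [Finset.mul_sum, mul_assoc]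

theorem differentiableAt_sqrt_zpow {s : ℝ} (hs : 0 < s) (n : ℤ) :
    DifferentiableAt ℝ (fun s => √s ^ n) s :=
  (differentiableAt_id.sqrt hs.ne').zpow (Or.inl (Real.sqrt_pos.2 hs).ne')

theorem hasFDerivAt_Hf (C : ℝ) (Γ : Fin N → ℝ) {p : PV N m}
    (hp : ∀ j k : Fin N, j ≠ k → dsq j k p ≠ 0) :
    HasFDerivAt (Hf C Γ) ((2 * C) • ∑ j, ∑ k, if j < k then (Γ j * Γ k) •
      (deriv (fun s => √s ^ ((2 : ℤ) - 2 * m)) (dsq j k p) • fderiv ℝ (dsq j k) p) else 0) p := by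
  refine (HasFDerivAt.fun_sum fun j _ => HasFDerivAt.fun_sum fun k _ => ?_).const_mul (2 * C)
  split_ifs with hjk
  · have hpos : 0 < dsq j k p := (dsq_nonneg j k p).lt_of_ne' (hp j k hjk.ne)
    exact ((differentiableAt_sqrt_zpow hpos _).hasDerivAt.comp_hasFDerivAt p
      (differentiableAt_dsq j k p).hasFDerivAt).const_mul (Γ j * Γ k)
  · exact hasFDerivAt_const 0 p

theorem fderiv_Hf_apply_eq_zero (C : ℝ) (Γ : Fin N → ℝ) {p v : PV N m}
    (hp : ∀ j k : Fin N, j ≠ k → dsq j k p ≠ 0)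
    (hv : ∀ j k : Fin N, fderiv ℝ (dsq j k) p v = 0) : fderiv ℝ (Hf C Γ) p v = 0 := by
  simp [(hasFDerivAt_Hf C Γ hp).fderiv, apply_ite (fun L : PV N m →L[ℝ] ℝ => L v), hv]

theorem pd_Fplus (Γ : Fin N → ℝ) (α β : Fin m) (p : PV N m) (l : Fin N) (γ : Fin m) (b : Bool) :
    pd (Fplus Γ α β) p (l, γ, b) =
      Γ l * ((if α = γ then p (l, β, b) else 0) + (if β = γ then p (l, α, b) else 0)) := by
  unfold pd Fplus
  rw [fderiv_fun_sum fun j _ => by fun_prop]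
  simp (disch := fun_prop) only [sum_apply, fderiv_const_mul, fderiv_fun_add, fderiv_fun_mul,
    fderiv_coord]
  rw [Finset.sum_eq_single l (fun j _ hj => by simp [hj]) (by simp)]
  simp only [smul_apply, add_apply, ContinuousLinearMap.proj_apply, Pi.single_apply,
    Prod.mk.injEq, true_and, smul_eq_mul]
  cases b <;> simp only [Bool.false_eq_true, and_true, and_false, if_false, mul_one, mul_zero,
    add_zero, mul_ite]
  all_goals split_ifs <;> simp_all

theorem pd_Fminus (Γ : Fin N → ℝ) (α β : Fin m) (p : PV N m) (l : Fin N) (γ : Fin m) (b : Bool) :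
    pd (Fminus Γ α β) p (l, γ, b) =
      Γ l * if b
        then (if β = γ then p (l, α, false) else 0) - (if α = γ then p (l, β, false) else 0)
        else (if α = γ then p (l, β, true) else 0) - (if β = γ then p (l, α, true) else 0) := by
  unfold pd Fminus
  rw [fderiv_fun_sum fun j _ => by fun_prop]
  simp (disch := fun_prop) only [sum_apply, fderiv_const_mul, fderiv_fun_sub, fderiv_fun_mul,
    fderiv_coord]
  rw [Finset.sum_eq_single l (fun j _ hj => by simp [hj]) (by simp)]
  simp only [smul_apply, add_apply, sub_apply, ContinuousLinearMap.proj_apply, Pi.single_apply,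
    Prod.mk.injEq, true_and, smul_eq_mul]
  cases b <;> simp only [Bool.false_eq_true, and_true, and_false, if_false, if_true, mul_one,
    mul_zero, add_zero, mul_ite]
  all_goals split_ifs <;> simp_all

end

section

open Matrix
open scoped Kronecker

variable {N m : ℕ}

def diagonalField (A : Matrix (Fin m × Bool) (Fin m × Bool) ℝ) (p : PV N m) : PV N m :=
  fun x => (A *ᵥ fun i => p (x.1, i)) x.2

theorem fderiv_dsq_diagonalField {A : Matrix (Fin m × Bool) (Fin m × Bool) ℝ} (hA : Aᵀ = -A)
    (j k : Fin N) (p : PV N m) : fderiv ℝ (dsq j k) p (diagonalField A p) = 0 := by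
  have hdiff : (A *ᵥ fun i => p (j, i) - p (k, i)) =
      fun i => diagonalField A p (j, i) - diagonalField A p (k, i) :=
    mulVec_sub A (fun i => p (j, i)) (fun i => p (k, i))
  have h := dotProduct_mulVec_self_eq_zero hA fun i => p (j, i) - p (k, i)
  rw [hdiff, dotProduct] at h
  rw [fderiv_dsq_apply, h, mul_zero]

/- In the complex coordinates `z = x + i y` of a vortex (`false` indexes `x`, `true` indexes `y`),
`plusGenerator α β` is `z ↦ -i (E_αβ + E_βα) z` and `minusGenerator α β` is `z ↦ (E_βα - E_αβ) z`:
the skew-Hermitian generators of the flows of `F⁺_{αβ}` and `F⁻_{αβ}`. -/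
def plusGenerator (α β : Fin m) : Matrix (Fin m × Bool) (Fin m × Bool) ℝ :=
  (single α β (1 : ℝ) + single β α 1) ⊗ₖ (single false true 1 - single true false 1)

def minusGenerator (α β : Fin m) : Matrix (Fin m × Bool) (Fin m × Bool) ℝ :=
  (single β α (1 : ℝ) - single α β 1) ⊗ₖ 1

theorem plusGenerator_transpose (α β : Fin m) : (plusGenerator α β)ᵀ = -plusGenerator α β := by
  ext ⟨γ, b⟩ ⟨γ', b'⟩
  cases b <;> cases b' <;> simp [plusGenerator, single_apply, and_comm, add_comm]

theorem minusGenerator_transpose (α β : Fin m) : (minusGenerator α β)ᵀ = -minusGenerator α β := by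
  ext ⟨γ, b⟩ ⟨γ', b'⟩
  cases b <;> cases b' <;> simp [minusGenerator, single_apply, one_apply, and_comm]

theorem hamiltonianField_Fplus {Γ : Fin N → ℝ} (hΓ : ∀ j, Γ j ≠ 0) (α β : Fin m) (p : PV N m) :
    hamiltonianField Γ (Fplus Γ α β) p = diagonalField (plusGenerator α β) p := by
  ext ⟨j, γ, b⟩
  cases b <;> simp [hamiltonianField, diagonalField, pd_Fplus, hΓ j, plusGenerator, mulVec,
    dotProduct, Fintype.sum_prod_type, single_apply, ite_and, add_mul, Finset.sum_add_distrib]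

theorem hamiltonianField_Fminus {Γ : Fin N → ℝ} (hΓ : ∀ j, Γ j ≠ 0) (α β : Fin m) (p : PV N m) :
    hamiltonianField Γ (Fminus Γ α β) p = diagonalField (minusGenerator α β) p := by
  ext ⟨j, γ, b⟩
  cases b <;> simp [hamiltonianField, diagonalField, pd_Fminus, hΓ j, minusGenerator, mulVec,
    dotProduct, Fintype.sum_prod_type, single_apply, one_apply, ite_and, sub_mul,
    Finset.sum_sub_distrib]

end

theorem hamiltonian_commutes_with_unitary_generators_general
    {N m : ℕ} (C : ℝ) (Γ : Fin N → ℝ) (hΓ : ∀ j, Γ j ≠ 0)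
    (p : PV N m) (hp : ∀ j k : Fin N, j ≠ k → dsq j k p ≠ 0) (α β : Fin m) :
    pb Γ (Hf C Γ) (Fplus Γ α β) p = 0 ∧
    pb Γ (Hf C Γ) (Fminus Γ α β) p = 0 := by
  rw [pb_eq_fderiv_hamiltonianField, pb_eq_fderiv_hamiltonianField, hamiltonianField_Fplus hΓ,
    hamiltonianField_Fminus hΓ]
  exact ⟨fderiv_Hf_apply_eq_zero C Γ hp
      (fderiv_dsq_diagonalField (plusGenerator_transpose α β) · · p),
    fderiv_Hf_apply_eq_zero C Γ hp (fderiv_dsq_diagonalField (minusGenerator_transpose α β) · · p)⟩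

theorem hamiltonian_commutes_with_unitary_generators
    {N m : ℕ} (hm : 1 < m) (C : ℝ) (Γ : Fin N → ℝ) (hΓ : ∀ j, Γ j ≠ 0)
    (p : PV N m) (hp : ∀ j k : Fin N, j ≠ k → dsq j k p ≠ 0) (α β : Fin m) :
    pb Γ (Hf C Γ) (Fplus Γ α β) p = 0 ∧
    pb Γ (Hf C Γ) (Fminus Γ α β) p = 0 :=
  hamiltonian_commutes_with_unitary_generators_general C Γ hΓ p hp α β

end
end
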